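/- If S ⊆ ℕ is multiplicative, then Σ_{n=1}^∞ μ*_S(n) φ(n)^k / n^{2k} = ∏_p (1 − (1 − 1/p)^k Σ_{a ≥ 1, p^a ∉ S} 1/p^{ak}) for every integer k ≥ 2. -/

import Mathlib

/-!
`μ*_S` is the unitary convolution of the multiplicative functions `ρ_S` and
`μ*(n) = (-1)^ω(n)`, hence is multiplicative, with `μ*_S(p^a) = ρ_S(p^a) - 1 ∈ {0, -1}`.
So `n ↦ μ*_S(n) φ(n)^k / n^(2k)` is multiplicative and bounded by `n^(-k)`, hence absolutely
summable for `k ≥ 2`, and its Euler product has local factor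
`1 - (1 - 1/p)^k Σ_{p^a ∉ S} p^(-ak)`.
-/

def udivisors (n : ℕ) : Finset ℕ := n.divisors.filter fun d => Nat.gcd d (n / d) = 1

def mustar (n : ℕ) : ℤ := (-1) ^ n.primeFactors.card

def rhoR (S : Set ℕ) [DecidablePred (· ∈ S)] (n : ℕ) : ℝ := if n ∈ S then 1 else 0

def mustarSR (S : Set ℕ) [DecidablePred (· ∈ S)] (n : ℕ) : ℝ :=
  ∑ d ∈ udivisors n, rhoR S d * (mustar (n / d) : ℝ)

open Finset

section UnitaryDivisors

lemma mem_udivisors {n d : ℕ} :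
    d ∈ udivisors n ↔ d ∣ n ∧ n ≠ 0 ∧ Nat.Coprime d (n / d) := by
  simp [udivisors, Nat.mem_divisors, and_assoc, Nat.Coprime]

lemma udivisors_one : udivisors 1 = {1} := by decide

lemma udivisors_prime_pow {p : ℕ} (hp : p.Prime) (e : ℕ) :
    udivisors (p ^ (e + 1)) = {1, p ^ (e + 1)} := by
  ext d
  simp only [mem_udivisors, mem_insert, mem_singleton]
  constructor
  · rintro ⟨hd, -, hcop⟩
    obtain ⟨i, hi, rfl⟩ := (Nat.dvd_prime_pow hp).mp hd
    rw [Nat.pow_div hi hp.pos] at hcop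
    by_contra! hne
    have hi0 : 0 < i := Nat.pos_of_ne_zero (by rintro rfl; simp at hne)
    have hie : 0 < e + 1 - i :=
      Nat.sub_pos_of_lt (lt_of_le_of_ne hi (by rintro rfl; simp at hne))
    rw [Nat.coprime_pow_left_iff hi0, Nat.coprime_pow_right_iff hie, Nat.coprime_self] at hcop
    exact hp.ne_one hcop
  · rintro (rfl | rfl)
    · simp [hp.ne_zero]
    · simp [hp.ne_zero, Nat.div_self (pow_pos hp.pos _)]

lemma Nat.Coprime.udivisors_mul {m n : ℕ} (h : m.Coprime n) :
    udivisors (m * n) = (udivisors m ×ˢ udivisors n).image fun q => q.1 * q.2 := by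
  ext d
  simp only [mem_image, mem_product, Prod.exists, mem_udivisors]
  constructor
  · rintro ⟨hd, hmn, hcop⟩
    have hsplit : d.gcd m * d.gcd n = d := by rw [← h.gcd_mul, Nat.gcd_eq_left hd]
    have hquot : m * n / d = m / d.gcd m * (n / d.gcd n) := by
      rw [Nat.div_mul_div_comm (Nat.gcd_dvd_right _ _) (Nat.gcd_dvd_right _ _), hsplit]
    refine ⟨d.gcd m, d.gcd n, ⟨⟨Nat.gcd_dvd_right _ _, left_ne_zero_of_mul hmn, ?_⟩,
      ⟨Nat.gcd_dvd_right _ _, right_ne_zero_of_mul hmn, ?_⟩⟩, hsplit⟩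
    · exact (hcop.coprime_dvd_left (Nat.gcd_dvd_left d m)).coprime_dvd_right
        (hquot ▸ Nat.dvd_mul_right _ _)
    · exact (hcop.coprime_dvd_left (Nat.gcd_dvd_left d n)).coprime_dvd_right
        (hquot ▸ Nat.dvd_mul_left _ _)
  · rintro ⟨d₁, d₂, ⟨⟨hd₁, hm, hcop₁⟩, ⟨hd₂, hn, hcop₂⟩⟩, rfl⟩
    refine ⟨mul_dvd_mul hd₁ hd₂, mul_ne_zero hm hn, ?_⟩
    rw [← Nat.div_mul_div_comm hd₁ hd₂]
    have h₁ : d₁.Coprime (n / d₂) :=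
      (h.coprime_dvd_left hd₁).coprime_dvd_right (Nat.div_dvd_of_dvd hd₂)
    have h₂ : d₂.Coprime (m / d₁) :=
      (h.symm.coprime_dvd_left hd₂).coprime_dvd_right (Nat.div_dvd_of_dvd hd₁)
    exact Nat.Coprime.mul_left (hcop₁.mul_right h₁) (h₂.mul_right hcop₂)

theorem Nat.Coprime.sum_udivisors_mul {R : Type*} [CommSemiring R] {f g : ℕ → R}
    (hf : ∀ a b, a ≠ 0 → b ≠ 0 → a.Coprime b → f (a * b) = f a * f b)
    (hg : ∀ a b, a ≠ 0 → b ≠ 0 → a.Coprime b → g (a * b) = g a * g b)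
    {m n : ℕ} (h : m.Coprime n) :
    ∑ d ∈ udivisors (m * n), f d * g (m * n / d) =
      (∑ d ∈ udivisors m, f d * g (m / d)) * ∑ d ∈ udivisors n, f d * g (n / d) := by
  have hinj : Set.InjOn (fun q : ℕ × ℕ => q.1 * q.2) ↑(udivisors m ×ˢ udivisors n) :=
    h.mul_injOn_divisors.mono (by gcongr <;> exact filter_subset _ _)
  rw [h.udivisors_mul, sum_image hinj, sum_mul_sum, ← sum_product']
  refine sum_congr rfl fun ⟨d₁, d₂⟩ hd => ?_
  obtain ⟨⟨hd₁, hm, -⟩, ⟨hd₂, hn, -⟩⟩ :=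
    And.imp mem_udivisors.mp mem_udivisors.mp (mem_product.mp hd)
  have hq₁ : m / d₁ ∣ m := Nat.div_dvd_of_dvd hd₁
  have hq₂ : n / d₂ ∣ n := Nat.div_dvd_of_dvd hd₂
  dsimp only
  rw [← Nat.div_mul_div_comm hd₁ hd₂,
    hf _ _ (ne_zero_of_dvd_ne_zero hm hd₁) (ne_zero_of_dvd_ne_zero hn hd₂)
      ((h.coprime_dvd_left hd₁).coprime_dvd_right hd₂),
    hg _ _ (ne_zero_of_dvd_ne_zero hm hq₁) (ne_zero_of_dvd_ne_zero hn hq₂)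
      ((h.coprime_dvd_left hq₁).coprime_dvd_right hq₂)]
  ring

end UnitaryDivisors

lemma mustar_mul_of_coprime {a b : ℕ} (h : a.Coprime b) :
    mustar (a * b) = mustar a * mustar b := by
  rw [mustar, h.primeFactors_mul, card_union_of_disjoint (Nat.Coprime.disjoint_primeFactors h),
    pow_add, mustar, mustar]

lemma mustar_prime_pow {p : ℕ} (hp : p.Prime) (e : ℕ) : mustar (p ^ (e + 1)) = -1 := by
  simp [mustar, Nat.primeFactors_prime_pow e.succ_ne_zero hp]

section Multiplicative

variable (S : Set ℕ) [DecidablePred (· ∈ S)]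

lemma rhoR_mul
    (hmul : ∀ m n : ℕ, 0 < m → 0 < n → m.Coprime n →
      (m * n ∈ S ↔ m ∈ S ∧ n ∈ S))
    (a b : ℕ) (ha : a ≠ 0) (hb : b ≠ 0) (h : a.Coprime b) :
    rhoR S (a * b) = rhoR S a * rhoR S b := by
  have hab := hmul a b (Nat.pos_of_ne_zero ha) (Nat.pos_of_ne_zero hb) h
  by_cases ha' : a ∈ S <;> by_cases hb' : b ∈ S <;> simp [rhoR, ha', hb', hab]

lemma mustarSR_zero : mustarSR S 0 = 0 := by simp [mustarSR, udivisors]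

lemma mustarSR_one (h1 : 1 ∈ S) : mustarSR S 1 = 1 := by
  simp [mustarSR, udivisors_one, rhoR, h1, mustar]

lemma mustarSR_prime_pow (h1 : 1 ∈ S) {p : ℕ} (hp : p.Prime) (e : ℕ) :
    mustarSR S (p ^ (e + 1)) = rhoR S (p ^ (e + 1)) - 1 := by
  have hne : 1 ≠ p ^ (e + 1) := (Nat.one_lt_pow e.succ_ne_zero hp.one_lt).ne
  rw [mustarSR, udivisors_prime_pow hp, sum_pair hne, Nat.div_one,
    Nat.div_self (pow_pos hp.pos _), mustar_prime_pow hp]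
  simp [rhoR, h1, mustar, neg_add_eq_sub]

lemma mustarSR_mul
    (hmul : ∀ m n : ℕ, 0 < m → 0 < n → m.Coprime n →
      (m * n ∈ S ↔ m ∈ S ∧ n ∈ S))
    {m n : ℕ} (h : m.Coprime n) : mustarSR S (m * n) = mustarSR S m * mustarSR S n :=
  h.sum_udivisors_mul (g := fun n => (mustar n : ℝ)) (rhoR_mul S hmul) fun a b _ _ hab => by
    rw [mustar_mul_of_coprime hab, Int.cast_mul]

lemma abs_mustarSR_le_one (h1 : 1 ∈ S)
    (hmul : ∀ m n : ℕ, 0 < m → 0 < n → m.Coprime n →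
      (m * n ∈ S ↔ m ∈ S ∧ n ∈ S))
    (n : ℕ) :
    |mustarSR S n| ≤ 1 := by
  induction n using Nat.recOnPosPrimePosCoprime with
  | zero => simp [mustarSR_zero]
  | one => simp [mustarSR_one S h1]
  | prime_pow p e hp he =>
    obtain ⟨e, rfl⟩ := Nat.exists_eq_add_of_lt he
    rw [zero_add, mustarSR_prime_pow S h1 hp, rhoR]
    split_ifs <;> norm_num
  | coprime a b _ _ hab iha ihb =>
    rw [mustarSR_mul S hmul hab, abs_mul]
    exact mul_le_one₀ iha (abs_nonneg _) ihb

end Multiplicative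

section TotientWeighted

noncomputable def totientWeighted (f : ℕ → ℝ) (k n : ℕ) : ℝ :=
  f n * (n.totient : ℝ) ^ k / (n : ℝ) ^ (2 * k)

variable {f : ℕ → ℝ} {k : ℕ}

lemma totientWeighted_zero (hk : k ≠ 0) : totientWeighted f k 0 = 0 := by
  simp [totientWeighted, hk]

lemma totientWeighted_one : totientWeighted f k 1 = f 1 := by
  simp [totientWeighted]

lemma totientWeighted_mul (hf : ∀ {m n : ℕ}, m.Coprime n → f (m * n) = f m * f n)
    {m n : ℕ} (h : m.Coprime n) :
    totientWeighted f k (m * n) = totientWeighted f k m * totientWeighted f k n := by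
  simp only [totientWeighted, hf h, Nat.totient_mul h]
  push_cast
  ring

lemma totientWeighted_prime_pow {p : ℕ} (hp : p.Prime) (a : ℕ) :
    totientWeighted f k (p ^ (a + 1)) =
      (1 - 1 / (p : ℝ)) ^ k * (f (p ^ (a + 1)) / (p : ℝ) ^ ((a + 1) * k)) := by
  have hp0 : (p : ℝ) ≠ 0 := by exact_mod_cast hp.ne_zero
  have htot : ((p ^ (a + 1)).totient : ℝ) = (1 - 1 / (p : ℝ)) * (p : ℝ) ^ (a + 1) := by
    rw [Nat.totient_prime_pow_succ hp, Nat.cast_mul, Nat.cast_sub hp.one_le, Nat.cast_pow]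
    field_simp
    ring
  rw [totientWeighted, htot, Nat.cast_pow, mul_pow, ← pow_mul, ← pow_mul]
  field_simp
  ring

lemma summable_norm_totientWeighted (hf : ∀ n, |f n| ≤ 1) (hk : 2 ≤ k) :
    Summable fun n => ‖totientWeighted f k n‖ := by
  refine .of_nonneg_of_le (fun n => norm_nonneg _) (fun n => ?_)
    (Real.summable_one_div_nat_pow.mpr (by omega : 1 < k))
  rcases n.eq_zero_or_pos with rfl | hn
  · simp [totientWeighted_zero (by omega : k ≠ 0)]
  have hn' : (0 : ℝ) < n := by exact_mod_cast hn
  calc ‖totientWeighted f k n‖ = |f n| * ((n.totient : ℝ) ^ k / (n : ℝ) ^ (2 * k)) := by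
        rw [totientWeighted, Real.norm_eq_abs, mul_div_assoc, abs_mul,
          abs_of_nonneg (a := _ / _) (by positivity)]
    _ ≤ 1 * ((n : ℝ) ^ k / (n : ℝ) ^ (2 * k)) := by
        gcongr
        · exact hf n
        · exact_mod_cast n.totient_le
    _ = 1 / (n : ℝ) ^ k := by
        rw [two_mul, pow_add]
        field_simp

end TotientWeighted

lemma tsum_totientWeighted_mustarSR_prime_pow (S : Set ℕ) [DecidablePred (· ∈ S)]
    (h1 : 1 ∈ S) {k : ℕ} (hsum : Summable fun n => ‖totientWeighted (mustarSR S) k n‖)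
    {p : ℕ} (hp : p.Prime) :
    ∑' e, totientWeighted (mustarSR S) k (p ^ e) =
      1 - (1 - 1 / (p : ℝ)) ^ k *
        ∑' a : ℕ, if p ^ (a + 1) ∉ S then (1 : ℝ) / (p : ℝ) ^ ((a + 1) * k) else 0 := by
  have hterm (a : ℕ) : totientWeighted (mustarSR S) k (p ^ (a + 1)) =
      -((1 - 1 / (p : ℝ)) ^ k *
        if p ^ (a + 1) ∉ S then (1 : ℝ) / (p : ℝ) ^ ((a + 1) * k) else 0) := by
    rw [totientWeighted_prime_pow hp, mustarSR_prime_pow S h1 hp, rhoR]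
    split_ifs <;> ring
  have hsum_p : Summable fun e => totientWeighted (mustarSR S) k (p ^ e) :=
    hsum.of_norm.comp_injective (Nat.pow_right_injective hp.two_le)
  rw [hsum_p.tsum_eq_zero_add]
  simp only [pow_zero, totientWeighted_one, mustarSR_one S h1, hterm,
    tsum_neg, tsum_mul_left, sub_eq_add_neg]

theorem stmt13 (S : Set ℕ) [DecidablePred (· ∈ S)] (k : ℕ) (hk : 2 ≤ k)
    (h1 : 1 ∈ S)
    (hmul : ∀ m n : ℕ, 0 < m → 0 < n → Nat.Coprime m n → (m * n ∈ S ↔ m ∈ S ∧ n ∈ S)) :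
    (∑' n : ℕ, mustarSR S (n + 1) * (Nat.totient (n + 1) : ℝ) ^ k
        / ((n + 1 : ℕ) : ℝ) ^ (2 * k))
      = ∏' p : Nat.Primes,
          (1 - (1 - 1 / ((p : ℕ) : ℝ)) ^ k *
            ∑' a : ℕ, if (p : ℕ) ^ (a + 1) ∉ S
              then (1 : ℝ) / ((p : ℕ) : ℝ) ^ ((a + 1) * k) else 0) := by
  set F := totientWeighted (mustarSR S) k
  have hF₀ : F 0 = 0 := totientWeighted_zero (by omega)
  have hsum : Summable fun n => ‖F n‖ :=
    summable_norm_totientWeighted (abs_mustarSR_le_one S h1 hmul) hk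
  calc ∑' n, F (n + 1)
      = ∑' n, F n := by rw [hsum.of_norm.tsum_eq_zero_add, hF₀, zero_add]
    _ = ∏' p : Nat.Primes, ∑' e, F ((p : ℕ) ^ e) :=
        (EulerProduct.eulerProduct_tprod (totientWeighted_one.trans (mustarSR_one S h1))
          (totientWeighted_mul (mustarSR_mul S hmul)) hsum hF₀).symm
    _ = _ := tprod_congr fun p => tsum_totientWeighted_mustarSR_prime_pow S h1 hsum p.prop
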